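/- Let (e_i) satisfy e_i ≤ √γ_i e_{i-1} + ξ²/(1-√γ_i) + δ_i with γ_i ≤ Γ < 1, δ_i ≤ Δ, all quantities nonnegative. Then limsup_{i→∞} e_i ≤ ξ²/(1-√Γ)² + Δ/(1-√Γ). -/
import Mathlib


open Filter

theorem limsup_tracking_biased (e γ δ : ℕ → ℝ) (Γ Δ ξ2 : ℝ)
    (he : ∀ i, 0 ≤ e i) (hγnn : ∀ i, 0 ≤ γ i) (hδnn : ∀ i, 0 ≤ δ i)
    (hξ : 0 ≤ ξ2) (hΔnn : 0 ≤ Δ)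
    (hγ : ∀ i, γ i ≤ Γ) (hΓ : Γ < 1) (hδ : ∀ i, δ i ≤ Δ)
    (hrec : ∀ i, 1 ≤ i →
      e i ≤ Real.sqrt (γ i) * e (i - 1) + ξ2 / (1 - Real.sqrt (γ i)) + δ i) :
    limsup e atTop ≤ ξ2 / (1 - Real.sqrt Γ) ^ 2 + Δ / (1 - Real.sqrt Γ) := by
  have hΓ0 : 0 ≤ Γ := le_trans (hγnn 0) (hγ 0)
  set q := Real.sqrt Γ with hq
  have hq0 : 0 ≤ q := Real.sqrt_nonneg Γ
  have hq1 : q < 1 := by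
    rw [hq, show (1:ℝ) = Real.sqrt 1 by simp]
    exact Real.sqrt_lt_sqrt hΓ0 hΓ
  have h1q : 0 < 1 - q := by linarith
  set C := ξ2 / (1 - q) + Δ with hC
  have hCnn : 0 ≤ C := add_nonneg (div_nonneg hξ h1q.le) hΔnn
  set L := C / (1 - q) with hL
  have hLnn : 0 ≤ L := div_nonneg hCnn h1q.le
  have hqγ : ∀ i, Real.sqrt (γ i) ≤ q := fun i => Real.sqrt_le_sqrt (hγ i)
  have hstep : ∀ i, 1 ≤ i → e i ≤ q * e (i - 1) + C := by
    intro i hi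
    have h1 : 0 < 1 - Real.sqrt (γ i) := by
      have := hqγ i; linarith
    have h2 : ξ2 / (1 - Real.sqrt (γ i)) ≤ ξ2 / (1 - q) := by
      apply div_le_div_of_nonneg_left hξ h1q
      have := hqγ i; linarith
    have h3 : Real.sqrt (γ i) * e (i - 1) ≤ q * e (i - 1) :=
      mul_le_mul_of_nonneg_right (hqγ i) (he _)
    have := hrec i hi
    have := hδ i
    rw [hC]; linarith
  have hbound : ∀ n, e n ≤ q ^ n * e 0 + L := by
    intro n
    induction n with
    | zero => simp [hLnn]
    | succ n ih =>
      have h1 : e (n + 1) ≤ q * e n + C := by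
        simpa using hstep (n + 1) (Nat.le_add_left 1 n)
      have h2 : q * e n ≤ q * (q ^ n * e 0 + L) :=
        mul_le_mul_of_nonneg_left ih hq0
      have hqL : q * L + C = L := by
        rw [hL]; field_simp; ring
      calc e (n + 1) ≤ q * e n + C := h1
        _ ≤ q * (q ^ n * e 0 + L) + C := by linarith
        _ = q ^ (n + 1) * e 0 + (q * L + C) := by ring
        _ = q ^ (n + 1) * e 0 + L := by rw [hqL]
  have htend : Tendsto (fun n => q ^ n * e 0 + L) atTop (nhds L) := by
    have : Tendsto (fun n : ℕ => q ^ n) atTop (nhds 0) :=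
      tendsto_pow_atTop_nhds_zero_of_lt_one hq0 hq1
    have := (this.mul_const (e 0)).add_const L
    simpa using this
  have hlb : IsBoundedUnder (· ≥ ·) atTop e :=
    ⟨0, (Eventually.of_forall he : ∀ᶠ n in atTop, 0 ≤ e n)⟩
  have hcob : IsCoboundedUnder (· ≤ ·) atTop e := hlb.isCoboundedUnder_le
  have hlim : limsup e atTop ≤ L := by
    have h1 : limsup e atTop ≤ limsup (fun n => q ^ n * e 0 + L) atTop := by
      exact limsup_le_limsup (Eventually.of_forall hbound) hcob
        htend.isBoundedUnder_le
    rwa [htend.limsup_eq] at h1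
  have : L = ξ2 / (1 - q) ^ 2 + Δ / (1 - q) := by
    rw [hL, hC]; field_simp
  linarith
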